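/- In every legal configuration of the edgeless cube Q_L accessible from the solved configuration f_solved, every non-center cluster contains exactly four cells of each of the six colors. -/

import Mathlib

universe u v

namespace InfRubik

/-- The three axes of the cube. -/
inductive Axis : Type
  | x | y | z
  deriving DecidableEq

/-- The six colors of the Rubik's cube.  A *configuration* is a map from cells to
`Option Color`, where `none` plays the role of the non-color `NaC`. -/
inductive Color : Type
  | red | white | green | orange | yellow | blue
  deriving DecidableEq

/-- The set `L̄† = -L ∪ {0} ∪ L ∪ {±∞}` of extended coordinates. -/
inductive ExtCoord (L : Type u) : Type u
  | neg : L → ExtCoord L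
  | zero : ExtCoord L
  | pos : L → ExtCoord L
  | negInf : ExtCoord L
  | posInf : ExtCoord L

namespace ExtCoord

variable {L : Type u}

/-- The reflection `r ↦ -r`. -/
def reflect : ExtCoord L → ExtCoord L
  | .neg r => .pos r
  | .zero => .zero
  | .pos r => .neg r
  | .negInf => .posInf
  | .posInf => .negInf

@[simp] theorem reflect_reflect (a : ExtCoord L) : a.reflect.reflect = a := by
  cases a <;> rfl

/-- Whether a coordinate is `±∞`. -/
def isInfB : ExtCoord L → Bool
  | .negInf => true
  | .posInf => true
  | _ => false

@[simp] theorem isInfB_reflect (a : ExtCoord L) : a.reflect.isInfB = a.isInfB := by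
  cases a <;> rfl

/-- Whether a coordinate is `0`. -/
def isZeroB : ExtCoord L → Bool
  | .zero => true
  | _ => false

@[simp] theorem isZeroB_reflect (a : ExtCoord L) : a.reflect.isZeroB = a.isZeroB := by
  cases a <;> rfl

end ExtCoord

/-- A point of the ambient space `L̄† × L̄† × L̄†`. -/
abbrev Triple (L : Type u) := ExtCoord L × ExtCoord L × ExtCoord L

/-- The coordinate of a point along an axis. -/
def Triple.coord {L : Type u} : Axis → Triple L → ExtCoord L
  | .x, p => p.1
  | .y, p => p.2.1
  | .z, p => p.2.2

/-- Quarter-turn rotation of the ambient space about an axis (right-hand rule). -/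
def rot {L : Type u} : Axis → Triple L → Triple L
  | .x, p => (p.1, p.2.2.reflect, p.2.1)
  | .y, p => (p.2.2, p.2.1, p.1.reflect)
  | .z, p => (p.2.1.reflect, p.1, p.2.2)

/-- Inverse quarter-turn rotation of the ambient space about an axis. -/
def rotInv {L : Type u} : Axis → Triple L → Triple L
  | .x, p => (p.1, p.2.2, p.2.1.reflect)
  | .y, p => (p.2.2.reflect, p.2.1, p.1)
  | .z, p => (p.2.1, p.1.reflect, p.2.2)

@[simp] theorem rotInv_rot {L : Type u} (i : Axis) (p : Triple L) : rotInv i (rot i p) = p := by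
  cases i <;> simp [rot, rotInv]

@[simp] theorem rot_rotInv {L : Type u} (i : Axis) (p : Triple L) : rot i (rotInv i p) = p := by
  cases i <;> simp [rot, rotInv]

/-- The number of infinite coordinates of a point. -/
def infCount {L : Type u} (p : Triple L) : ℕ :=
  (if p.1.isInfB then 1 else 0) + (if p.2.1.isInfB then 1 else 0) +
    (if p.2.2.isInfB then 1 else 0)

/-- The number of zero coordinates of a point. -/
def zeroCount {L : Type u} (p : Triple L) : ℕ :=
  (if p.1.isZeroB then 1 else 0) + (if p.2.1.isZeroB then 1 else 0) +
    (if p.2.2.isZeroB then 1 else 0)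

theorem infCount_rot {L : Type u} (i : Axis) (p : Triple L) : infCount (rot i p) = infCount p := by
  rcases p with ⟨a, b, c⟩
  cases i <;> cases a <;> cases b <;> cases c <;> rfl

theorem infCount_rotInv {L : Type u} (i : Axis) (p : Triple L) :
    infCount (rotInv i p) = infCount p := by
  rcases p with ⟨a, b, c⟩
  cases i <;> cases a <;> cases b <;> cases c <;> rfl

@[simp] theorem coord_rot_self {L : Type u} (i : Axis) (p : Triple L) :
    (rot i p).coord i = p.coord i := by
  cases i <;> rfl

@[simp] theorem coord_rotInv_self {L : Type u} (i : Axis) (p : Triple L) :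
    (rotInv i p).coord i = p.coord i := by
  cases i <;> rfl

/-- A cell of the *edgeless* cube `Q_L`: a point of the ambient space with exactly one
infinite coordinate. -/
def Cell (L : Type u) : Type u := {p : Triple L // infCount p = 1}

open Classical in
/-- The underlying map on points of the quarter-turn twist `T_{i,α}`. -/
noncomputable def qtTriple {L : Type u} (i : Axis) (α : ExtCoord L) (p : Triple L) : Triple L :=
  if p.coord i = α then rot i p else p

open Classical in
/-- The underlying map on points of the inverse quarter-turn twist `T_{i,α}⁻¹`. -/
noncomputable def qtTripleInv {L : Type u} (i : Axis) (α : ExtCoord L) (p : Triple L) : Triple L :=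
  if p.coord i = α then rotInv i p else p

theorem qtTripleInv_qtTriple {L : Type u} (i : Axis) (α : ExtCoord L) (p : Triple L) :
    qtTripleInv i α (qtTriple i α p) = p := by
  classical
  by_cases h : p.coord i = α <;> simp [qtTriple, qtTripleInv, h]

theorem qtTriple_qtTripleInv {L : Type u} (i : Axis) (α : ExtCoord L) (p : Triple L) :
    qtTriple i α (qtTripleInv i α p) = p := by
  classical
  by_cases h : p.coord i = α <;> simp [qtTriple, qtTripleInv, h]

theorem infCount_qtTriple {L : Type u} (i : Axis) (α : ExtCoord L) (p : Triple L) :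
    infCount (qtTriple i α p) = infCount p := by
  classical
  by_cases h : p.coord i = α <;> simp [qtTriple, h, infCount_rot]

theorem infCount_qtTripleInv {L : Type u} (i : Axis) (α : ExtCoord L) (p : Triple L) :
    infCount (qtTripleInv i α p) = infCount p := by
  classical
  by_cases h : p.coord i = α <;> simp [qtTripleInv, h, infCount_rotInv]

/-- The quarter-turn twist `T_{i,α}` of the edgeless cube, as a permutation of cells. -/
noncomputable def quarterTurn {L : Type u} (i : Axis) (α : ExtCoord L) : Equiv.Perm (Cell L) where
  toFun c := ⟨qtTriple i α c.1, by rw [infCount_qtTriple]; exact c.2⟩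
  invFun c := ⟨qtTripleInv i α c.1, by rw [infCount_qtTripleInv]; exact c.2⟩
  left_inv c := Subtype.ext (qtTripleInv_qtTriple i α c.1)
  right_inv c := Subtype.ext (qtTriple_qtTripleInv i α c.1)

/-- The basic twists of the edgeless cube: quarter turns, half turns and reverse
quarter turns of a single layer. -/
def IsBasic (L : Type u) (π : Equiv.Perm (Cell L)) : Prop :=
  ∃ (i : Axis) (α : ExtCoord L),
    π = quarterTurn i α ∨ π = quarterTurn i α ^ 2 ∨ π = (quarterTurn i α)⁻¹

/-! ### The edged cube -/

/-- How a quarter-turn about axis `i` transports the face tag of a cell. -/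
def tagMap : Axis → Axis → Axis
  | .x, .x => .x
  | .x, .y => .z
  | .x, .z => .y
  | .y, .x => .z
  | .y, .y => .y
  | .y, .z => .x
  | .z, .x => .y
  | .z, .y => .x
  | .z, .z => .z

@[simp] theorem tagMap_tagMap (i j : Axis) : tagMap i (tagMap i j) = j := by
  cases i <;> cases j <;> rfl

theorem isInfB_coord_tagMap_rot {L : Type u} (i j : Axis) (p : Triple L) :
    ((rot i p).coord (tagMap i j)).isInfB = (p.coord j).isInfB := by
  cases i <;> cases j <;> simp [rot, Triple.coord, tagMap]

theorem isInfB_coord_tagMap_rotInv {L : Type u} (i j : Axis) (p : Triple L) :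
    ((rotInv i p).coord (tagMap i j)).isInfB = (p.coord j).isInfB := by
  cases i <;> cases j <;> simp [rotInv, Triple.coord, tagMap]

/-- A cell of the *edged* cube `Q̄_L`: a point of the ambient space together with a tag
naming an axis, such that the coordinate along the tagged axis is infinite (the tag
indicates the face to which the cell belongs). -/
def ECell (L : Type u) : Type u := {q : Triple L × Axis // (q.1.coord q.2).isInfB = true}

open Classical in
/-- The underlying map of the quarter-turn twist `T_{i,α}` of the edged cube. -/
noncomputable def eqtFun {L : Type u} (i : Axis) (α : ExtCoord L) (q : Triple L × Axis) :
    Triple L × Axis :=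
  if q.1.coord i = α then (rot i q.1, tagMap i q.2) else q

open Classical in
/-- The underlying map of the reverse quarter-turn twist of the edged cube. -/
noncomputable def eqtFunInv {L : Type u} (i : Axis) (α : ExtCoord L) (q : Triple L × Axis) :
    Triple L × Axis :=
  if q.1.coord i = α then (rotInv i q.1, tagMap i q.2) else q

theorem eqtFunInv_eqtFun {L : Type u} (i : Axis) (α : ExtCoord L) (q : Triple L × Axis) :
    eqtFunInv i α (eqtFun i α q) = q := by
  classical
  by_cases h : q.1.coord i = α <;> simp [eqtFun, eqtFunInv, h]

theorem eqtFun_eqtFunInv {L : Type u} (i : Axis) (α : ExtCoord L) (q : Triple L × Axis) :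
    eqtFun i α (eqtFunInv i α q) = q := by
  classical
  by_cases h : q.1.coord i = α <;> simp [eqtFun, eqtFunInv, h]

theorem isInfB_eqtFun {L : Type u} (i : Axis) (α : ExtCoord L) (q : Triple L × Axis) :
    (((eqtFun i α q).1.coord (eqtFun i α q).2)).isInfB = ((q.1.coord q.2)).isInfB := by
  classical
  by_cases h : q.1.coord i = α <;> simp [eqtFun, h, isInfB_coord_tagMap_rot]

theorem isInfB_eqtFunInv {L : Type u} (i : Axis) (α : ExtCoord L) (q : Triple L × Axis) :
    (((eqtFunInv i α q).1.coord (eqtFunInv i α q).2)).isInfB = ((q.1.coord q.2)).isInfB := by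
  classical
  by_cases h : q.1.coord i = α <;> simp [eqtFunInv, h, isInfB_coord_tagMap_rotInv]

/-- The quarter-turn twist `T_{i,α}` of the edged cube, as a permutation of cells.  A face
twist moves, besides the cells of its face, also the coupled edge and corner cells of the
adjacent faces lying in the twisted layer. -/
noncomputable def equarterTurn {L : Type u} (i : Axis) (α : ExtCoord L) :
    Equiv.Perm (ECell L) where
  toFun c := ⟨eqtFun i α c.1, by rw [isInfB_eqtFun]; exact c.2⟩
  invFun c := ⟨eqtFunInv i α c.1, by rw [isInfB_eqtFunInv]; exact c.2⟩
  left_inv c := Subtype.ext (eqtFunInv_eqtFun i α c.1)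
  right_inv c := Subtype.ext (eqtFun_eqtFunInv i α c.1)

/-- The basic twists of the edged cube. -/
def IsEBasic (L : Type u) (π : Equiv.Perm (ECell L)) : Prop :=
  ∃ (i : Axis) (α : ExtCoord L),
    π = equarterTurn i α ∨ π = equarterTurn i α ^ 2 ∨ π = (equarterTurn i α)⁻¹

/-! ### Transfinite sequences of twists and their action on labellings -/

open Classical in
/-- The eventual value of an ordinal-indexed family of `Option`-values: `some v` if the family
stabilizes on `some v` before `lam`, and `none` otherwise. -/
noncomputable def eventualVal {X : Type u} (lam : Ordinal.{v})
    (g : ∀ η, η < lam → Option X) : Option X :=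
  if h : ∃ v : X, ∃ γ, γ < lam ∧ ∀ η (hη : η < lam), γ ≤ η → g η hη = some v
  then some h.choose else none

/-- Applying an ordinal-indexed sequence of permutations to an initial labelling:
`run σ f0 θ` is the labelling obtained after the first `θ` moves, with
`f_{η+1}(c) = f_η(σ_η⁻¹ c)` at successors and the eventual value (or `NaC = none`)
at limits. -/
noncomputable def run {Cl : Type v} {X : Type u} (σ : Ordinal.{v} → Equiv.Perm Cl)
    (f0 : Cl → Option X) (θ : Ordinal.{v}) : Cl → Option X :=
  Ordinal.limitRecOn (motive := fun _ => Cl → Option X) θ f0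
    (fun η fη c => fη ((σ η)⁻¹ c))
    (fun lam _ prev c => eventualVal lam (fun η h => prev η h c))

/-- A (transfinite) sequence of twists of length `len`, each of which satisfies the
predicate `B` (being a basic twist). -/
structure TwistSeq (Cl : Type v) (B : Equiv.Perm Cl → Prop) : Type (v + 1) where
  len : Ordinal.{v}
  seq : Ordinal.{v} → Equiv.Perm Cl
  basic : ∀ η, η < len → B (seq η)

namespace TwistSeq

variable {Cl : Type v} {B : Equiv.Perm Cl → Prop}

/-- The terminal labelling obtained by applying a sequence of twists to `f0`. -/
noncomputable def terminal (s : TwistSeq Cl B) {X : Type u} (f0 : Cl → Option X) :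
    Cl → Option X :=
  run s.seq f0 s.len

/-- A sequence of twists is convergent over `f0` if the terminal labelling is legal,
i.e. never takes the value `NaC = none`. -/
def ConvOver (s : TwistSeq Cl B) {X : Type u} (f0 : Cl → Option X) : Prop :=
  ∀ c, s.terminal f0 c ≠ none

/-- A sequence of twists is universally convergent if it is convergent over the identity
labelling. -/
def UnivConv (s : TwistSeq Cl B) : Prop := s.ConvOver (fun c => some c)

/-- A sequence is twist-finite if each twist occurs in it only finitely many times. -/
def TwistFinite (s : TwistSeq Cl B) : Prop :=
  ∀ π : Equiv.Perm Cl, {η : Ordinal | η < s.len ∧ s.seq η = π}.Finite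

/-- Two sequences are equivalent, `σ⃗ ∼ τ⃗`, when they produce the same terminal
configuration over every initial configuration. -/
def Sim (s t : TwistSeq Cl B) : Prop :=
  ∀ f : Cl → Option Color, s.terminal f = t.terminal f

/-- Concatenation of twist sequences: `s.concat t` performs `s` and then `t`. -/
noncomputable def concat (s t : TwistSeq Cl B) : TwistSeq Cl B where
  len := s.len + t.len
  seq := fun η => if η < s.len then s.seq η else t.seq (η - s.len)
  basic := by
    intro η hη
    by_cases h : η < s.len
    · simpa [h] using s.basic η h
    · have hc : 0 < t.len := by
        rcases eq_zero_or_pos t.len with h0 | h0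
        · rw [h0, add_zero] at hη; exact absurd hη h
        · exact h0
      have h2 : η - s.len < t.len := Ordinal.sub_lt_of_lt_add hη hc
      simpa [h] using t.basic _ h2

/-- The empty sequence of twists. -/
def empty (Cl : Type v) (B : Equiv.Perm Cl → Prop) : TwistSeq Cl B where
  len := 0
  seq := fun _ => 1
  basic := fun η hη => absurd hη (by simp)

/-- `n`-fold self-concatenation of a sequence of twists. -/
noncomputable def npow (s : TwistSeq Cl B) : ℕ → TwistSeq Cl B
  | 0 => empty Cl B
  | n + 1 => (npow s n).concat s

end TwistSeq

/-- Basic sequences of twists of the edgeless cube `Q_L`. -/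
abbrev BasicSeq (L : Type u) := TwistSeq (Cell L) (IsBasic L)

/-- Basic sequences of twists of the edged cube `Q̄_L`. -/
abbrev EBasicSeq (L : Type u) := TwistSeq (ECell L) (IsEBasic L)

/-- `f` is accessible from `f0` when some basic sequence applied to `f0` is convergent with
terminal configuration `f`. -/
def Accessible {Cl : Type v} (B : Equiv.Perm Cl → Prop) (f0 f : Cl → Option Color) : Prop :=
  ∃ s : TwistSeq Cl B, s.ConvOver f0 ∧ s.terminal f0 = f

/-- A labelling is legal if it never takes the value `NaC = none`. -/
def IsLegal {Cl : Type v} {X : Type u} (f : Cl → Option X) : Prop := ∀ c, f c ≠ none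

/-! ### Clusters, faces, and distinguished configurations -/

/-- The group of permutations of cells of the edgeless cube generated by the basic twists. -/
def twistGroup (L : Type u) : Subgroup (Equiv.Perm (Cell L)) :=
  Subgroup.closure {π | IsBasic L π}

/-- The cluster of a cell of the edgeless cube: its orbit under the group generated by the
basic twists. -/
def cluster {L : Type u} (c : Cell L) : Set (Cell L) :=
  {d | ∃ g ∈ twistGroup L, g c = d}

/-- The group of permutations of cells of the edged cube generated by the basic twists. -/
def etwistGroup (L : Type u) : Subgroup (Equiv.Perm (ECell L)) :=
  Subgroup.closure {π | IsEBasic L π}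

/-- The cluster of a cell of the edged cube. -/
def ecluster {L : Type u} (c : ECell L) : Set (ECell L) :=
  {d | ∃ g ∈ etwistGroup L, g c = d}

open Classical in
/-- The solved configuration of the edgeless cube: each face gets one of six distinct
colors. -/
noncomputable def fSolved (L : Type u) : Cell L → Option Color := fun c =>
  if c.1.1 = ExtCoord.posInf then some .red
  else if c.1.1 = ExtCoord.negInf then some .orange
  else if c.1.2.1 = ExtCoord.posInf then some .blue
  else if c.1.2.1 = ExtCoord.negInf then some .green
  else if c.1.2.2 = ExtCoord.posInf then some .white
  else some .yellow

/-- The color of each face: the face is named by the axis and the sign (`true` = `+∞`). -/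
def faceColor : Axis → Bool → Color
  | .x, true => .red
  | .x, false => .orange
  | .y, true => .blue
  | .y, false => .green
  | .z, true => .white
  | .z, false => .yellow

open Classical in
/-- The solved configuration of the edged cube. -/
noncomputable def efSolved (L : Type u) : ECell L → Option Color := fun c =>
  if c.1.1.coord c.1.2 = ExtCoord.posInf then some (faceColor c.1.2 true)
  else some (faceColor c.1.2 false)

/-- A center cell of the edgeless cube: two of its coordinates are `0`. -/
def IsCenter {L : Type u} (c : Cell L) : Prop := zeroCount c.1 = 2

/-- The global rotation of the whole cube about an axis, as a permutation of the cells of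
the edgeless cube. -/
def rotAllPerm {L : Type u} (i : Axis) : Equiv.Perm (Cell L) where
  toFun c := ⟨rot i c.1, by rw [infCount_rot]; exact c.2⟩
  invFun c := ⟨rotInv i c.1, by rw [infCount_rotInv]; exact c.2⟩
  left_inv c := Subtype.ext (rotInv_rot i c.1)
  right_inv c := Subtype.ext (rot_rotInv i c.1)

/-- The group of global rotations of the edgeless cube. -/
def rotGroup (L : Type u) : Subgroup (Equiv.Perm (Cell L)) :=
  Subgroup.closure (Set.range (rotAllPerm (L := L)))

/-- A configuration of the edgeless cube is standard if every non-center cluster contains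
exactly four cells of each of the six colors, and its restriction to the center cluster is
obtained from the solved configuration by a global rotation of the cube. -/
def Standard {L : Type u} (f : Cell L → Option Color) : Prop :=
  (∀ c : Cell L, ¬IsCenter c → ∀ γ : Color, {d ∈ cluster c | f d = some γ}.ncard = 4) ∧
  ∃ g ∈ rotGroup L, ∀ d : Cell L, IsCenter d → f d = fSolved L (g⁻¹ d)

/-- A configuration is invariant under all quarter-turn face twists. -/
def FaceInvariant {L : Type u} (f : Cell L → Option Color) : Prop :=
  ∀ (i : Axis) (α : ExtCoord L), α.isInfB = true →
    ∀ c : Cell L, f ((quarterTurn i α)⁻¹ c) = f c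

/-! ### Quadrants and cluster configurations -/

/-- The upper-right quadrant `D` of the Front face: the cells `(x, y, +∞)` with `x ∈ L`
and `y ∈ {0} ∪ L`; every non-center cluster has a unique representative in `D`. -/
def Dset (L : Type u) : Set (Cell L) :=
  {c | ∃ (a : L) (b : ExtCoord L), (b = ExtCoord.zero ∨ ∃ r : L, b = ExtCoord.pos r) ∧
    c.1 = (ExtCoord.pos a, b, ExtCoord.posInf)}

/-- Two cells lie in the same face quadrant (an image of `D` under a global rotation). -/
def SameQuadrant {L : Type u} (d d' : Cell L) : Prop :=
  ∃ g ∈ rotGroup L, d ∈ (fun c => g c) '' Dset L ∧ d' ∈ (fun c => g c) '' Dset L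

/-! ### Coupled cells of the edged cube -/

/-- Two cells of the edged cube are coupled if they occupy the same location but belong to
different faces (they are parts of a common edge or corner cubie). -/
def Coupled {L : Type u} (c c' : ECell L) : Prop := c.1.1 = c'.1.1 ∧ c.1.2 ≠ c'.1.2

/-- An edge cell: exactly two infinite coordinates. -/
def IsEdgeCell {L : Type u} (c : ECell L) : Prop := infCount c.1.1 = 2

/-- A corner cell: three infinite coordinates. -/
def IsCornerCell {L : Type u} (c : ECell L) : Prop := infCount c.1.1 = 3

/-- An edge-cross cell: an edge cell one of whose coordinates is `0`. -/
def IsEdgeCross {L : Type u} (c : ECell L) : Prop :=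
  IsEdgeCell c ∧ 0 < zeroCount c.1.1

end InfRubik

/-!
A quarter turn moves each cell either not at all or by the rotation of the whole cube about
the same axis. Hence the cluster of a cell `slot γ q` (face `γ`, in-face coordinates `q`) is its
orbit under the rotations of the cube: the cells `slot γ' q'` with `q'` one of the four
quarter-turn images of `q`, four cells on each face, so four of each colour in the solved
configuration. Along a transfinite sequence of twists, the number of cells of a given colour
in a finite twist-invariant set never increases: successor steps permute the set, and at a
limit the finitely many cells that end with that colour all carry it at one earlier stage.
A legal terminal configuration thus colours the 24 cells of a cluster with at most four cells
of each of the six colours, hence exactly four.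
-/

namespace InfRubik

open ExtCoord Set
open scoped Pointwise

variable {L : Type u}

@[simp] theorem ExtCoord.reflect_posInf : (posInf : ExtCoord L).reflect = negInf := rfl

@[simp] theorem ExtCoord.reflect_negInf : (negInf : ExtCoord L).reflect = posInf := rfl

@[simp] theorem ExtCoord.reflect_inj {a b : ExtCoord L} : a.reflect = b.reflect ↔ a = b :=
  ⟨fun h => by simpa using congrArg reflect h, congrArg _⟩

instance : Fintype Color where
  elems := {.red, .white, .green, .orange, .yellow, .blue}
  complete γ := by cases γ <;> decide

/-- The cell on face `γ` with in-face coordinates `q`, normalised so that every `slot γ q` is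
obtained from `slot .white q` by quarter turns about `x` alone or about `y` alone. -/
def slot : Color → ExtCoord L × ExtCoord L → Triple L
  | .white, q => (q.1, q.2, posInf)
  | .green, q => (q.1, negInf, q.2)
  | .yellow, q => (q.1, q.2.reflect, negInf)
  | .blue, q => (q.1, posInf, q.2.reflect)
  | .red, q => (posInf, q.2, q.1.reflect)
  | .orange, q => (negInf, q.2, q.1)

def rotPair (q : ExtCoord L × ExtCoord L) : ExtCoord L × ExtCoord L := (q.2.reflect, q.1)

def quad (q : ExtCoord L × ExtCoord L) : Set (ExtCoord L × ExtCoord L) :=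
  {q, rotPair q, rotPair (rotPair q), rotPair (rotPair (rotPair q))}

def cubeOrbit (q : ExtCoord L × ExtCoord L) : Set (Triple L) :=
  ⋃ γ, slot γ '' quad q

def IsFinitePair (q : ExtCoord L × ExtCoord L) : Prop :=
  q.1.isInfB = false ∧ q.2.isInfB = false

theorem rotPair_four (q : ExtCoord L × ExtCoord L) :
    rotPair (rotPair (rotPair (rotPair q))) = q := by
  simp [rotPair]

theorem rotPair_mem_quad {q q' : ExtCoord L × ExtCoord L} (h : q' ∈ quad q) :
    rotPair q' ∈ quad q := by
  rcases h with rfl | rfl | rfl | rfl <;> simp [quad, rotPair_four]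

theorem iterate_rotPair_mem_quad {q q' : ExtCoord L × ExtCoord L} (h : q' ∈ quad q) (k : ℕ) :
    rotPair^[k] q' ∈ quad q := by
  induction k with
  | zero => exact h
  | succ k ih => rw [Function.iterate_succ_apply']; exact rotPair_mem_quad ih

theorem ncard_quad {q : ExtCoord L × ExtCoord L} (hq : q ≠ (zero, zero)) :
    (quad q).ncard = 4 := by
  obtain ⟨a, b⟩ := q
  rw [quad, ncard_insert_of_notMem, ncard_insert_of_notMem, ncard_pair]
  all_goals cases a <;> cases b <;> simp_all [rotPair, reflect]

theorem IsFinitePair.rotPair {q : ExtCoord L × ExtCoord L} (hq : IsFinitePair q) :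
    IsFinitePair (rotPair q) :=
  ⟨by rw [InfRubik.rotPair, isInfB_reflect]; exact hq.2, hq.1⟩

theorem IsFinitePair.of_mem_quad {q q' : ExtCoord L × ExtCoord L} (hq : IsFinitePair q)
    (h : q' ∈ quad q) : IsFinitePair q' := by
  rcases h with rfl | rfl | rfl | rfl
  exacts [hq, hq.rotPair, hq.rotPair.rotPair, hq.rotPair.rotPair.rotPair]

theorem rot_slot (i : Axis) (γ : Color) (q : ExtCoord L × ExtCoord L) :
    ∃ γ' k, rot i (slot γ q) = slot γ' (rotPair^[k] q) := by
  obtain ⟨a, b⟩ := q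
  (cases i <;> cases γ) <;>
    [use .red, 1; use .green, 0; use .yellow, 0; use .orange, 3; use .blue, 0; use .white, 0;
     use .yellow, 2; use .red, 0; use .green, 3; use .white, 0; use .orange, 2; use .blue, 1;
     use .blue, 1; use .white, 1; use .red, 1; use .green, 1; use .yellow, 3; use .orange, 1] <;>
    simp [rot, slot, rotPair]

theorem mapsTo_rot_cubeOrbit (i : Axis) (q : ExtCoord L × ExtCoord L) :
    MapsTo (rot i) (cubeOrbit q) (cubeOrbit q) := by
  rintro _ ⟨_, ⟨γ, rfl⟩, q', hq', rfl⟩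
  obtain ⟨γ', k, h⟩ := rot_slot i γ q'
  rw [h]
  exact mem_iUnion.2 ⟨γ', mem_image_of_mem _ (iterate_rotPair_mem_quad hq' k)⟩

theorem slot_mem_iff_white {S : Set (Triple L)} (hS : ∀ i, MapsTo (rot i) S S) (γ : Color)
    (q : ExtCoord L × ExtCoord L) : slot γ q ∈ S ↔ slot .white q ∈ S := by
  have rotX := hS .x
  have rotY := hS .y
  constructor <;> intro h <;> cases γ <;>
    first
    | exact h
    | simpa [rot, slot] using rotX h
    | simpa [rot, slot] using rotX (rotX h)
    | simpa [rot, slot] using rotX (rotX (rotX h))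
    | simpa [rot, slot] using rotY h
    | simpa [rot, slot] using rotY (rotY (rotY h))

theorem cubeOrbit_subset {S : Set (Triple L)} (hS : ∀ i, MapsTo (rot i) S S) {γ : Color}
    {q : ExtCoord L × ExtCoord L} (h : slot γ q ∈ S) : cubeOrbit q ⊆ S := by
  have turn : ∀ q, slot .white q ∈ S → slot .white (rotPair q) ∈ S := fun q h => hS .z h
  have hw := (slot_mem_iff_white hS γ q).1 h
  rintro _ ⟨_, ⟨γ', rfl⟩, q', hq', rfl⟩
  rw [slot_mem_iff_white hS]
  rcases hq' with rfl | rfl | rfl | rfl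
  exacts [hw, turn _ hw, turn _ (turn _ hw), turn _ (turn _ (turn _ hw))]

theorem infCount_slot (γ : Color) {q : ExtCoord L × ExtCoord L} (hq : IsFinitePair q) :
    infCount (slot γ q) = 1 := by
  obtain ⟨ha, hb⟩ := hq
  cases γ <;> simp [infCount, slot, ha, hb] <;> rfl

theorem ne_posInf_of_isInfB {a : ExtCoord L} (h : a.isInfB = false) : a ≠ posInf := by
  rintro rfl; cases h

theorem ne_negInf_of_isInfB {a : ExtCoord L} (h : a.isInfB = false) : a ≠ negInf := by
  rintro rfl; cases h

theorem fSolved_slot (γ : Color) {q : ExtCoord L × ExtCoord L} (hq : IsFinitePair q) :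
    fSolved L ⟨slot γ q, infCount_slot γ hq⟩ = some γ := by
  obtain ⟨ha, hb⟩ := hq
  have hb' : q.2.reflect.isInfB = false := by rwa [isInfB_reflect]
  cases γ <;> simp [fSolved, slot, ne_posInf_of_isInfB, ne_negInf_of_isInfB, ha, hb, hb']

theorem zeroCount_slot_zero (γ : Color) :
    zeroCount (slot γ ((zero, zero) : ExtCoord L × ExtCoord L)) = 2 := by
  cases γ <;> rfl

theorem exists_slot (c : Cell L) : ∃ γ q, IsFinitePair q ∧ c.1 = slot γ q := by
  obtain ⟨⟨x, y, z⟩, h⟩ := c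
  have inf_cases : ∀ a : ExtCoord L, a.isInfB = true → a = posInf ∨ a = negInf := by
    intro a; cases a <;> simp [isInfB]
  rcases hx : x.isInfB <;> rcases hy : y.isInfB <;> rcases hz : z.isInfB <;>
    simp [infCount, hx, hy, hz] at h
  · rcases inf_cases z hz with rfl | rfl
    · exact ⟨.white, (x, y), ⟨hx, hy⟩, rfl⟩
    · exact ⟨.yellow, (x, y.reflect), ⟨hx, by simpa using hy⟩, by simp [slot]⟩
  · rcases inf_cases y hy with rfl | rfl
    · exact ⟨.blue, (x, z.reflect), ⟨hx, by simpa using hz⟩, by simp [slot]⟩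
    · exact ⟨.green, (x, z), ⟨hx, hz⟩, rfl⟩
  · rcases inf_cases x hx with rfl | rfl
    · exact ⟨.red, (z.reflect, y), ⟨by simpa using hz, hy⟩, by simp [slot]⟩
    · exact ⟨.orange, (z, y), ⟨hz, hy⟩, rfl⟩

theorem slot_injective (γ : Color) : Function.Injective (slot γ : _ → Triple L) := by
  rintro ⟨a, b⟩ ⟨a', b'⟩ h
  cases γ <;> simp_all [slot]

abbrev cellVal : Cell L → Triple L := Subtype.val

def cellsOf (S : Set (Triple L)) : Set (Cell L) := cellVal ⁻¹' S

theorem rot_rot_rot_rot (i : Axis) (p : Triple L) : rot i (rot i (rot i (rot i p))) = p := by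
  cases i <;> simp [rot]

theorem rot_mem_iff {S : Set (Triple L)} {i : Axis} (hS : MapsTo (rot i) S S) {p : Triple L} :
    rot i p ∈ S ↔ p ∈ S :=
  ⟨fun h => rot_rot_rot_rot i p ▸ hS (hS (hS h)), fun h => hS h⟩

theorem quarterTurn_mem_stabilizer {S : Set (Triple L)} (hS : ∀ i, MapsTo (rot i) S S)
    (i : Axis) (α : ExtCoord L) :
    quarterTurn i α ∈ MulAction.stabilizer (Equiv.Perm (Cell L)) (cellsOf S) := by
  refine MulAction.mem_stabilizer_set.2 fun d => ?_
  show qtTriple i α d.1 ∈ S ↔ d.1 ∈ S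
  unfold qtTriple
  split_ifs
  exacts [rot_mem_iff (hS i), Iff.rfl]

theorem twistGroup_le_stabilizer {S : Set (Triple L)} (hS : ∀ i, MapsTo (rot i) S S) :
    twistGroup L ≤ MulAction.stabilizer (Equiv.Perm (Cell L)) (cellsOf S) := by
  refine (Subgroup.closure_le _).2 ?_
  rintro _ ⟨i, α, rfl | rfl | rfl⟩ <;> have h := quarterTurn_mem_stabilizer hS i α
  exacts [h, pow_mem h 2, inv_mem h]

theorem mem_cluster_self (c : Cell L) : c ∈ cluster c := ⟨1, one_mem _, rfl⟩

/-- Turning the layer through a cell moves it as a rotation of the whole cube would. -/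
theorem mapsTo_rot_image_cluster (c : Cell L) (i : Axis) :
    MapsTo (rot i) (cellVal '' cluster c) (cellVal '' cluster c) := by
  rintro _ ⟨_, ⟨g, hg, rfl⟩, rfl⟩
  refine ⟨quarterTurn i ((g c).1.coord i) (g c),
    ⟨_ * g, mul_mem (Subgroup.subset_closure ⟨i, _, Or.inl rfl⟩) hg, rfl⟩, ?_⟩
  exact if_pos rfl

theorem cluster_eq_cellsOf_cubeOrbit {c : Cell L} {γ : Color} {q : ExtCoord L × ExtCoord L}
    (hc : c.1 = slot γ q) : cluster c = cellsOf (cubeOrbit q) := by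
  ext d
  constructor
  · rintro ⟨g, hg, rfl⟩
    have hcq : c ∈ cellsOf (cubeOrbit q) :=
      show c.1 ∈ cubeOrbit q from hc ▸ mem_iUnion.2 ⟨γ, mem_image_of_mem _ (mem_insert _ _)⟩
    exact (MulAction.mem_stabilizer_set.1
      (twistGroup_le_stabilizer (mapsTo_rot_cubeOrbit · q) hg) c).2 hcq
  · intro hd
    obtain ⟨d', hd', hdd⟩ := cubeOrbit_subset (mapsTo_rot_image_cluster c)
      (by rw [← hc]; exact mem_image_of_mem _ (mem_cluster_self c)) hd
    exact Subtype.ext hdd ▸ hd'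

theorem ncard_fSolved_cubeOrbit {q : ExtCoord L × ExtCoord L} (hq : IsFinitePair q)
    (h0 : q ≠ (zero, zero)) (γ : Color) :
    {d ∈ cellsOf (cubeOrbit q) | fSolved L d = some γ}.ncard = 4 := by
  have hface : {d ∈ cellsOf (cubeOrbit q) | fSolved L d = some γ} =
      cellsOf (slot γ '' quad q) := by
    ext ⟨p, hp⟩
    simp only [cellsOf, mem_preimage, cubeOrbit, mem_iUnion, mem_image]
    constructor
    · rintro ⟨⟨γ', q', hq', rfl⟩, hf⟩
      rw [fSolved_slot γ' (hq.of_mem_quad hq'), Option.some_inj] at hf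
      exact ⟨q', hq', hf ▸ rfl⟩
    · rintro ⟨q', hq', rfl⟩
      exact ⟨⟨γ, q', hq', rfl⟩, fSolved_slot γ (hq.of_mem_quad hq')⟩
  have hcells : slot γ '' quad q ⊆ range cellVal := by
    rintro _ ⟨q', hq', rfl⟩
    exact ⟨⟨_, infCount_slot γ (hq.of_mem_quad hq')⟩, rfl⟩
  rw [hface, cellsOf,
    ncard_preimage_of_injective_subset_range (f := cellVal) Subtype.val_injective hcells,
    ncard_image_of_injective _ (slot_injective γ), ncard_quad h0]

theorem finite_cellsOf_cubeOrbit (q : ExtCoord L × ExtCoord L) :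
    (cellsOf (cubeOrbit q)).Finite :=
  have hquad : (quad q).Finite := by unfold quad; exact toFinite _
  (finite_iUnion fun γ => hquad.image (slot γ)).preimage Subtype.val_injective.injOn

theorem isLegal_fSolved : IsLegal (fSolved L) := fun c => by
  unfold fSolved
  split_ifs <;> simp

section Run

variable {Cl : Type v} {X : Type u}

theorem run_zero (σ : Ordinal.{v} → Equiv.Perm Cl) (f0 : Cl → Option X) : run σ f0 0 = f0 :=
  Ordinal.limitRecOn_zero _ _ _

theorem run_add_one (σ : Ordinal.{v} → Equiv.Perm Cl) (f0 : Cl → Option X) (η : Ordinal.{v}) :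
    run σ f0 (η + 1) = fun c => run σ f0 η ((σ η)⁻¹ c) :=
  Ordinal.limitRecOn_add_one _ _ _ _

theorem run_limit (σ : Ordinal.{v} → Equiv.Perm Cl) (f0 : Cl → Option X) {lam : Ordinal.{v}}
    (h : Order.IsSuccLimit lam) :
    run σ f0 lam = fun c => eventualVal lam (fun η _ => run σ f0 η c) :=
  Ordinal.limitRecOn_limit _ _ _ _ h

theorem eventualVal_eq_some {lam : Ordinal.{v}} {g : ∀ η, η < lam → Option X} {x : X}
    (h : eventualVal lam g = some x) :
    ∃ γ, γ < lam ∧ ∀ η (hη : η < lam), γ ≤ η → g η hη = some x := by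
  classical
  unfold eventualVal at h
  split_ifs at h with hex
  obtain rfl : hex.choose = x := Option.some_injective _ h
  exact hex.choose_spec

theorem exists_lt_forall_eq_of_eventualVal {lam : Ordinal.{v}} (hlam : lam ≠ 0) {ι : Type*}
    {T : Set ι} (hT : T.Finite) {g : Ordinal.{v} → ι → Option X} {x : X}
    (h : ∀ d ∈ T, eventualVal lam (fun η _ => g η d) = some x) :
    ∃ η < lam, ∀ d ∈ T, g η d = some x := by
  have : Nonempty (Iio lam) := ⟨⟨0, pos_iff_ne_zero.2 hlam⟩⟩
  have hev : ∀ d ∈ T, ∀ᶠ η : Iio lam in Filter.atTop, g η d = some x := by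
    intro d hd
    obtain ⟨γ, hγ, hall⟩ := eventualVal_eq_some (h d hd)
    exact Filter.eventually_atTop.2 ⟨⟨γ, hγ⟩, fun η hη => hall η η.2 hη⟩
  obtain ⟨η, hη⟩ := ((Filter.eventually_all_finite hT).2 hev).exists
  exact ⟨η, η.2, hη⟩

theorem ncard_run_le (σ : Ordinal.{v} → Equiv.Perm Cl) (f0 : Cl → Option X) {C : Set Cl}
    (hC : C.Finite) {θ : Ordinal.{v}}
    (hσ : ∀ η < θ, σ η ∈ MulAction.stabilizer (Equiv.Perm Cl) C) (x : X) :
    ∀ η ≤ θ, {d ∈ C | run σ f0 η d = some x}.ncard ≤ {d ∈ C | f0 d = some x}.ncard := by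
  intro η
  induction η using Ordinal.limitRecOn with
  | zero => intro _; rw [run_zero]
  | add_one η ih =>
    intro hle
    have hη : η < θ := (Order.lt_add_one_iff.2 le_rfl).trans_le hle
    have hmoved : {d ∈ C | run σ f0 (η + 1) d = some x} =
        σ η • {d ∈ C | run σ f0 η d = some x} := by
      ext d
      rw [mem_smul_set_iff_inv_smul_mem, run_add_one]
      exact and_congr_left' (MulAction.mem_stabilizer_set.1 (inv_mem (hσ η hη)) d).symm
    rw [hmoved, ncard_smul_set]
    exact ih hη.le
  | limit lam hlim ih =>
    intro hle
    set T := {d ∈ C | run σ f0 lam d = some x}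
    have hT : ∀ d ∈ T, eventualVal lam (fun η _ => run σ f0 η d) = some x := by
      rintro d ⟨-, hd⟩
      rwa [run_limit σ f0 hlim] at hd
    obtain ⟨η, hη, hηT⟩ := exists_lt_forall_eq_of_eventualVal hlim.ne_bot
      (hC.subset fun d hd => hd.1) hT
    calc T.ncard ≤ {d ∈ C | run σ f0 η d = some x}.ncard :=
          ncard_le_ncard (fun d hd => ⟨hd.1, hηT d hd⟩) (hC.subset fun d hd => hd.1)
      _ ≤ _ := ih η hη (hη.le.trans hle)

end Run

section Fibers

variable {α β : Type*} [Fintype β]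

theorem sum_ncard_fiber {C : Set α} (hC : C.Finite) {f : α → Option β} (hf : IsLegal f) :
    ∑ b, {d ∈ C | f d = some b}.ncard = C.ncard := by
  classical
  obtain ⟨s, rfl⟩ := hC.exists_finset_coe
  rw [ncard_coe_finset, Finset.card_eq_sum_card_fiberwise (f := f) (t := Finset.univ)
    (fun _ _ => Finset.mem_univ _), Fintype.sum_option]
  simp [Finset.filter_eq_empty_iff.2 fun d _ => hf d, ← Finset.coe_filter]

theorem ncard_fiber_eq_of_le {C : Set α} (hC : C.Finite) {f g : α → Option β} (hf : IsLegal f)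
    (hg : IsLegal g)
    (hle : ∀ b, {d ∈ C | f d = some b}.ncard ≤ {d ∈ C | g d = some b}.ncard) (b : β) :
    {d ∈ C | f d = some b}.ncard = {d ∈ C | g d = some b}.ncard :=
  (Finset.sum_eq_sum_iff_of_le fun b _ => hle b).1
    ((sum_ncard_fiber hC hf).trans (sum_ncard_fiber hC hg).symm) b (Finset.mem_univ b)

end Fibers

end InfRubik

open InfRubik in
theorem four_of_each_color_general {L : Type u} (f : Cell L → Option Color)
    (hf : Accessible (IsBasic L) (fSolved L) f)
    (c : Cell L) (hc : ¬ IsCenter c) (γ : Color) :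
    {d ∈ cluster c | f d = some γ}.ncard = 4 := by
  obtain ⟨s, hconv, rfl⟩ := hf
  obtain ⟨γ₀, q, hq, hcq⟩ := exists_slot c
  have hq0 : q ≠ (.zero, .zero) := by
    rintro rfl
    exact hc (by rw [IsCenter, hcq, zeroCount_slot_zero])
  have hC := finite_cellsOf_cubeOrbit q
  rw [cluster_eq_cellsOf_cubeOrbit hcq, ← ncard_fSolved_cubeOrbit hq hq0 γ]
  refine ncard_fiber_eq_of_le hC hconv isLegal_fSolved (fun γ' => ?_) γ
  refine ncard_run_le s.seq (fSolved L) hC (fun η hη => ?_) γ' s.len le_rfl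
  exact twistGroup_le_stabilizer (mapsTo_rot_cubeOrbit · q)
    (Subgroup.subset_closure (s.basic η hη))

open InfRubik in
/-- In every legal configuration of the edgeless cube accessible from the solved
configuration, every non-center cluster contains exactly four cells of each color. -/
theorem four_of_each_color {L : Type u} [Infinite L] (f : Cell L → Option Color)
    (hf : Accessible (IsBasic L) (fSolved L) f)
    (c : Cell L) (hc : ¬ IsCenter c) (γ : Color) :
    {d ∈ cluster c | f d = some γ}.ncard = 4 :=
  four_of_each_color_general f hf c hc γ
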